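/- Let n ≥ 2 be an integer and x = (x_1,…,x_n) ∈ ℝ^n. Then the posterior probability of one cluster satisfies p(T_n = 1 | x) ≤ 1 / ( 1 + (1/(2√2)) exp( −x̄_n² / 2 ) ), where x̄_n = (1/n) ∑_{j=1}^n x_j. -/

import Mathlib

/-!
Since `p(T_n = 1 | x) ≤ p₁ / (p₁ + p₂)` with `p_t = p(x, T_n = t)`, it suffices to show
`p₂ ≥ c · p₁` for `c = e^{-x̄²/2}/(2√2)`. We have `p₁ = m(x)/n`, and `p₂` is at least its
contribution from the `n` partitions `({j}, {j}ᶜ)`, each of CRP weight `1/(2n(n-1))`.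
Completing the square in `x_j` gives `m(x_j) m(x_{-j}) ≥ e^{-x̄²/2} m(x)/√2` for every `j`.
-/

open MeasureTheory Filter Finset

/-- The standard normal density `φ(u) = (2π)^{-1/2} exp(-u²/2)`. -/
noncomputable def stdNormalPDF (u : ℝ) : ℝ :=
  (Real.sqrt (2 * Real.pi))⁻¹ * Real.exp (-u ^ 2 / 2)

/-- The single-cluster marginal `m(x_S)` of a unit-variance normal component with
standard normal prior on the mean, in closed form. -/
noncomputable def clusterMarginal {n : ℕ} (x : Fin n → ℝ) (S : Finset (Fin n)) : ℝ :=
  (Real.sqrt (S.card + 1))⁻¹ * (∏ j ∈ S, stdNormalPDF (x j)) *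
    Real.exp ((∑ j ∈ S, x j) ^ 2 / (2 * (S.card + 1)))

/-- The set `𝒜_t(n)` of ordered partitions `(A_1, …, A_t)` of `{1,…,n}` into `t`
nonempty disjoint sets. -/
def orderedPartitions (n t : ℕ) : Finset (Fin t → Finset (Fin n)) :=
  Finset.univ.filter fun A =>
    (∀ i, (A i).Nonempty) ∧ (∀ i j, i ≠ j → Disjoint (A i) (A j)) ∧
      Finset.univ.biUnion A = Finset.univ

/-- The CRP (α = 1) weight `p(A) = (1/(n!·t!)) ∏_i (|A_i| - 1)!` of an ordered partition
of `{1,…,n}` into `t` parts. -/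
noncomputable def crpWeight {n t : ℕ} (A : Fin t → Finset (Fin n)) : ℝ :=
  (1 / ((n.factorial : ℝ) * (t.factorial : ℝ))) * ∏ i, (((A i).card - 1).factorial : ℝ)

/-- The joint law of the data and the number of clusters under the standard normal DPM
with concentration parameter `α = 1`:
`p(x, T_n = t) = ∑_{A ∈ 𝒜_t(n)} p(A) ∏_i m(x_{A_i})`. -/
noncomputable def pJoint (n t : ℕ) (x : Fin n → ℝ) : ℝ :=
  ∑ A ∈ orderedPartitions n t, crpWeight A * ∏ i, clusterMarginal x (A i)

/-- The posterior probability of one cluster,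
`p(T_n = 1 | x) = p(x, T_n = 1) / ∑_{t=1}^n p(x, T_n = t)`. -/
noncomputable def posteriorOne (n : ℕ) (x : Fin n → ℝ) : ℝ :=
  pJoint n 1 x / ∑ t ∈ Finset.Icc 1 n, pJoint n t x

lemma div_sum_le_one_div_one_add {ι : Type*} {s : Finset ι} {f : ι → ℝ} {a b : ι} {c : ℝ}
    (ha : a ∈ s) (hb : b ∈ s) (hab : a ≠ b) (hf : ∀ i ∈ s, 0 ≤ f i) (hfa : 0 < f a)
    (hc : 0 ≤ c) (hcf : c * f a ≤ f b) :
    f a / ∑ i ∈ s, f i ≤ 1 / (1 + c) := by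
  have hpos : 0 < f a * (1 + c) := mul_pos hfa (by linarith)
  have hsum : f a * (1 + c) ≤ ∑ i ∈ s, f i := by
    linarith [add_le_sum hf ha hb hab]
  rw [div_le_div_iff₀ (hpos.trans_le hsum) (by linarith)]
  linarith

/- In `a` the right side is minimal at `a = 2s/(N+2)`, with value `s²/(2(N+2))`; the claim then
reduces to `1/((N+1)(N+2)) ≤ 1/N²`. -/
lemma sq_div_sub_sq_div_le {N : ℝ} (hN : 0 < N) (a s : ℝ) :
    s ^ 2 / (2 * (N + 1)) - s ^ 2 / (2 * N ^ 2) ≤ a ^ 2 / 4 + (s - a) ^ 2 / (2 * N) := by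
  rw [div_sub_div _ _ (by positivity) (by positivity),
    div_add_div _ _ (by norm_num) (by positivity), div_le_div_iff₀ (by positivity) (by positivity)]
  nlinarith [mul_nonneg (mul_nonneg hN.le (by linarith : (0 : ℝ) ≤ N + 1))
      (sq_nonneg ((N + 2) * a - 2 * s)),
    mul_nonneg (by linarith : (0 : ℝ) ≤ 6 * N + 4) (sq_nonneg s), sq_nonneg s]

lemma stdNormalPDF_pos (u : ℝ) : 0 < stdNormalPDF u := by
  unfold stdNormalPDF
  positivity

section

variable {n : ℕ} (x : Fin n → ℝ)

lemma clusterMarginal_pos (S : Finset (Fin n)) : 0 < clusterMarginal x S := by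
  unfold clusterMarginal
  have := prod_pos fun j (_ : j ∈ S) => stdNormalPDF_pos (x j)
  positivity

lemma crpWeight_nonneg {t : ℕ} (A : Fin t → Finset (Fin n)) : 0 ≤ crpWeight A := by
  unfold crpWeight
  positivity

lemma pJoint_nonneg (t : ℕ) : 0 ≤ pJoint n t x :=
  sum_nonneg fun A _ => mul_nonneg (crpWeight_nonneg A)
    (prod_nonneg fun _ _ => (clusterMarginal_pos x _).le)

lemma orderedPartitions_one (hn : 0 < n) :
    orderedPartitions n 1 = {fun _ => (univ : Finset (Fin n))} := by
  ext A
  simp only [orderedPartitions, mem_filter, mem_univ, true_and, mem_singleton]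
  constructor
  · rintro ⟨-, -, hcover⟩
    funext i
    rw [Fin.eq_zero i, ← hcover, show (univ : Finset (Fin 1)) = {0} from rfl, singleton_biUnion]
  · rintro rfl
    exact ⟨fun _ => univ_nonempty_iff.mpr ⟨⟨0, hn⟩⟩,
      fun i j hij => absurd (Subsingleton.elim i j) hij, by simp⟩

lemma pJoint_one (hn : 0 < n) : pJoint n 1 x = (n : ℝ)⁻¹ * clusterMarginal x univ := by
  rw [pJoint, orderedPartitions_one hn, sum_singleton, Fin.prod_univ_one, crpWeight,
    Fin.prod_univ_one, card_univ, Fintype.card_fin, ← Nat.mul_factorial_pred hn.ne',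
    Nat.factorial_one]
  have : ((n - 1).factorial : ℝ) ≠ 0 := by positivity
  push_cast
  field_simp

lemma pJoint_one_pos (hn : 0 < n) : 0 < pJoint n 1 x := by
  rw [pJoint_one x hn]
  have := clusterMarginal_pos x univ
  positivity

def splitOff (j : Fin n) : Fin 2 → Finset (Fin n) := ![{j}, {j}ᶜ]

lemma splitOff_injective : Function.Injective (splitOff (n := n)) := fun j k h => by
  simpa [splitOff] using congrFun h 0

lemma splitOff_mem_orderedPartitions (hn : 2 ≤ n) (j : Fin n) :
    splitOff j ∈ orderedPartitions n 2 := by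
  simp only [orderedPartitions, mem_filter, mem_univ, true_and]
  refine ⟨fun i => ?_, fun i k hik => ?_, ?_⟩
  · fin_cases i
    · exact singleton_nonempty j
    · rw [← card_pos]
      simp only [splitOff, Fin.mk_one, Fin.isValue, Matrix.cons_val_one, Matrix.cons_val_fin_one,
        card_compl, Fintype.card_fin, card_singleton]
      omega
  · fin_cases i <;> fin_cases k <;> simp_all [splitOff]
  · ext a
    simp only [mem_biUnion, mem_univ, true_and, iff_true]
    by_cases h : a = j
    · exact ⟨0, by simp [splitOff, h]⟩
    · exact ⟨1, by simp [splitOff, h]⟩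

lemma crpWeight_splitOff (hn : 2 ≤ n) (j : Fin n) :
    crpWeight (splitOff j) = (2 * n * (n - 1 : ℝ))⁻¹ := by
  obtain ⟨m, rfl⟩ : ∃ m, n = m + 2 := ⟨n - 2, by omega⟩
  simp only [crpWeight, Fin.prod_univ_two, splitOff, Matrix.cons_val_zero, Matrix.cons_val_one,
    card_singleton, card_compl, Fintype.card_fin, Nat.sub_self, Nat.factorial_zero,
    show m + 2 - 1 - 1 = m from rfl,
    show (m + 2).factorial = (m + 2) * ((m + 1) * m.factorial) from rfl,
    Nat.factorial_two]
  have : (m.factorial : ℝ) ≠ 0 := by positivity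
  have : (m : ℝ) + 1 ≠ 0 := by positivity
  push_cast
  rw [show (m : ℝ) + 2 - 1 = m + 1 by ring]
  field_simp

lemma sum_splitOff_le_pJoint_two (hn : 2 ≤ n) :
    ∑ j, crpWeight (splitOff j) * ∏ i, clusterMarginal x (splitOff j i) ≤ pJoint n 2 x := by
  calc _ = ∑ A ∈ univ.image splitOff, crpWeight A * ∏ i, clusterMarginal x (A i) :=
        (sum_image fun j _ k _ h => splitOff_injective h).symm
    _ ≤ pJoint n 2 x := by
        refine sum_le_sum_of_subset_of_nonneg ?_ fun A _ _ => mul_nonneg (crpWeight_nonneg A)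
          (prod_nonneg fun i _ => (clusterMarginal_pos x _).le)
        rintro _ hA
        obtain ⟨j, -, rfl⟩ := mem_image.mp hA
        exact splitOff_mem_orderedPartitions hn j

lemma clusterMarginal_singleton_mul_compl (j : Fin n) :
    clusterMarginal x {j} * clusterMarginal x {j}ᶜ =
      (Real.sqrt 2 * Real.sqrt n)⁻¹ * (∏ k, stdNormalPDF (x k)) *
        Real.exp (x j ^ 2 / 4 + ((∑ k, x k) - x j) ^ 2 / (2 * n)) := by
  have hcard : (({j}ᶜ : Finset (Fin n)).card : ℝ) + 1 = n := by
    rw [card_compl, card_singleton, Fintype.card_fin, Nat.cast_sub j.pos]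
    ring
  have hsum : ∑ k ∈ {j}ᶜ, x k = (∑ k, x k) - x j := by
    rw [← sum_compl_add_sum {j} x, sum_singleton, add_sub_cancel_right]
  rw [clusterMarginal, clusterMarginal, hcard, hsum, card_singleton, sum_singleton, prod_singleton,
    ← prod_mul_prod_compl {j} fun k => stdNormalPDF (x k), prod_singleton, Real.exp_add,
    Nat.cast_one, one_add_one_eq_two, show (2 : ℝ) * 2 = 4 by norm_num, mul_inv]
  ring

lemma clusterMarginal_univ_le_splitOff (j : Fin n) :
    (Real.sqrt 2)⁻¹ * Real.exp (-(((∑ k, x k) / n) ^ 2) / 2) * clusterMarginal x univ ≤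
      clusterMarginal x {j} * clusterMarginal x {j}ᶜ := by
  have hn : (0 : ℝ) < n := Nat.cast_pos.mpr j.pos
  set s := ∑ k, x k
  set C := ∏ k, stdNormalPDF (x k)
  have hC : 0 < C := prod_pos fun k _ => stdNormalPDF_pos (x k)
  have hexp : Real.exp (-((s / n) ^ 2) / 2) * Real.exp (s ^ 2 / (2 * (n + 1))) ≤
      Real.exp (x j ^ 2 / 4 + (s - x j) ^ 2 / (2 * n)) := by
    rw [← Real.exp_add, Real.exp_le_exp]
    have := sq_div_sub_sq_div_le hn (x j) s
    have : -((s / n) ^ 2) / 2 = -(s ^ 2 / (2 * n ^ 2)) := by field_simp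
    linarith
  have hsqrt : (Real.sqrt 2 * Real.sqrt (n + 1))⁻¹ ≤ (Real.sqrt 2 * Real.sqrt n)⁻¹ := by
    gcongr
    linarith
  rw [clusterMarginal_singleton_mul_compl, clusterMarginal, card_univ, Fintype.card_fin]
  calc (Real.sqrt 2)⁻¹ * Real.exp (-((s / n) ^ 2) / 2) *
        ((Real.sqrt (n + 1))⁻¹ * C * Real.exp (s ^ 2 / (2 * (n + 1))))
      = (Real.sqrt 2 * Real.sqrt (n + 1))⁻¹ * C *
          (Real.exp (-((s / n) ^ 2) / 2) * Real.exp (s ^ 2 / (2 * (n + 1)))) := by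
        rw [mul_inv]; ring
    _ ≤ (Real.sqrt 2 * Real.sqrt n)⁻¹ * C * Real.exp (x j ^ 2 / 4 + (s - x j) ^ 2 / (2 * n)) := by
        gcongr

lemma mul_pJoint_one_le_pJoint_two (hn : 2 ≤ n) :
    1 / (2 * Real.sqrt 2) * Real.exp (-(((∑ j, x j) / n) ^ 2) / 2) * pJoint n 1 x ≤
      pJoint n 2 x := by
  have hn' : (2 : ℝ) ≤ n := by exact_mod_cast hn
  set B := (Real.sqrt 2)⁻¹ * Real.exp (-(((∑ j, x j) / n) ^ 2) / 2) * clusterMarginal x univ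
    with hB_def
  have hB : 0 < B := by have := clusterMarginal_pos x univ; positivity
  calc 1 / (2 * Real.sqrt 2) * Real.exp (-(((∑ j, x j) / n) ^ 2) / 2) * pJoint n 1 x
      = (2 * n : ℝ)⁻¹ * B := by
        rw [pJoint_one x (by omega), hB_def, one_div, mul_inv]; ring
    _ ≤ n * (2 * n * (n - 1 : ℝ))⁻¹ * B := by
        gcongr
        have : (n : ℝ) * (2 * n * ((n : ℝ) - 1))⁻¹ = (2 * ((n : ℝ) - 1))⁻¹ := by field_simp
        rw [this]
        exact inv_anti₀ (by linarith) (by linarith)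
    _ = ∑ j, crpWeight (splitOff j) * B := by
        rw [sum_congr rfl fun j _ => by rw [crpWeight_splitOff hn j], sum_const, card_univ,
          Fintype.card_fin, nsmul_eq_mul, mul_assoc]
    _ ≤ ∑ j, crpWeight (splitOff j) * ∏ i, clusterMarginal x (splitOff j i) := by
        gcongr with j
        · exact crpWeight_nonneg _
        · rw [Fin.prod_univ_two]
          exact clusterMarginal_univ_le_splitOff x j
    _ ≤ pJoint n 2 x := sum_splitOff_le_pJoint_two x hn

end

/-- For `n ≥ 2` and `x ∈ ℝⁿ`, the posterior probability of one cluster satisfies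
`p(T_n = 1 | x) ≤ 1 / (1 + (1/(2√2)) exp(-x̄_n²/2))` where `x̄_n = (1/n) ∑_j x_j`. -/
theorem posterior_one_upper_bound (n : ℕ) (hn : 2 ≤ n) (x : Fin n → ℝ) :
    posteriorOne n x ≤
      1 / (1 + 1 / (2 * Real.sqrt 2) * Real.exp (-(((∑ j, x j) / n) ^ 2) / 2)) :=
  div_sum_le_one_div_one_add (a := 1) (b := 2) (mem_Icc.mpr ⟨le_rfl, by omega⟩)
    (mem_Icc.mpr ⟨by norm_num, hn⟩) (by norm_num)
    (fun t _ => pJoint_nonneg x t) (pJoint_one_pos x (by omega)) (by positivity)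
    (mul_pJoint_one_le_pJoint_two x hn)
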